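/- arXiv:1403.7468 — 5 statements merged into one kernel-verified Lean document; each statement's English description precedes it below -/
import Mathlib

section
/- Let d ≥ 1 and partition the index set {1, …, d} into disjoint blocks B₁, …, B_k of sizes p₁, …, p_k. For each m define u_m(y) = Σ_{j ∈ B_m} y_j² and its degree-zero homogeneous extension X̂_m(y) = u_m(y)/‖y‖² on ℝ^d \ {0}. Then for every x with ‖x‖ = 1 and all m, l: ΔX̂_m(x) = 2(p_m - d·u_m(x)) and ⟪∇X̂_m(x), ∇X̂_l(x)⟫ = 4 u_m(x) (δ_{ml} - u_l(x)). That is, the spherical Laplacian projects through the map (u₁, …, u_{k-1}) onto the polynomial model on the simplex with Γ(X_m, X_l) = 4X_m(δ_{ml} - X_l) and L(X_m) = 2(p_m - d X_m). -/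
/-! A block sum `u_S(y) = ∑_{j ∈ S} y_j²` is the quadratic form `⟪P_S y, y⟫` of the orthogonal
projection `P_S` onto the coordinates in `S`, so it suffices to study `X̂(y) = ⟪A y, y⟫ / ‖y‖²`
for a symmetric operator `A`. Its gradient is `(2 / ‖y‖²) (A y - X̂(y) y)`, i.e. `2 (A x - X̂(x) x)`
on the unit sphere, and differentiating once more and summing over an orthonormal basis
(Parseval) gives `ΔX̂(x) = 2 (tr A - d X̂(x))`. For `A = P_S` one has `tr P_S = |S|` and
`⟪P_S x, P_T x⟫ = u_{S ∩ T}(x)`, which is `δ_{ST} u_S(x)` for the blocks of a partition. -/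

open RealInnerProductSpace

/-- The Euclidean Laplacian on `ℝ^d`: the sum of the second partial derivatives. -/
noncomputable def lap {d : ℕ} (f : EuclideanSpace ℝ (Fin d) → ℝ)
    (x : EuclideanSpace ℝ (Fin d)) : ℝ :=
  ∑ i, fderiv ℝ (fun y => fderiv ℝ f y (EuclideanSpace.single i 1)) x
    (EuclideanSpace.single i 1)

section QuadraticFormOverNormSq

open ContinuousLinearMap

variable {F : Type*} [NormedAddCommGroup F] [InnerProductSpace ℝ F] {A : F →L[ℝ] F}

theorem hasFDerivAt_inner_apply_self (hA : (A : F →ₗ[ℝ] F).IsSymmetric) (y : F) :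
    HasFDerivAt (fun y => ⟪A y, y⟫) (2 • innerSL ℝ (A y)) y := by
  refine (A.hasFDerivAt.inner ℝ (hasFDerivAt_id y)).congr_fderiv ?_
  ext v
  have hAv : ⟪A v, y⟫ = ⟪A y, v⟫ := (hA v y).trans (real_inner_comm _ _)
  simp [fderivInnerCLM_apply, two_smul, hAv]

theorem hasFDerivAt_inv_norm_sq {y : F} (hy : y ≠ 0) :
    HasFDerivAt (fun y => (‖y‖ ^ 2)⁻¹) ((-2 / ‖y‖ ^ 4) • innerSL ℝ y) y := by
  refine ((hasDerivAt_inv (pow_ne_zero 2 (norm_ne_zero_iff.2 hy))).comp_hasFDerivAt y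
    (hasStrictFDerivAt_norm_sq y).hasFDerivAt).congr_fderiv ?_
  ext v
  simp only [neg_smul, neg_apply, smul_apply, coe_innerSL_apply, nsmul_eq_mul, Nat.cast_ofNat,
    smul_eq_mul]
  ring

theorem hasFDerivAt_inner_apply_self_div_norm_sq (hA : (A : F →ₗ[ℝ] F).IsSymmetric) {y : F}
    (hy : y ≠ 0) :
    HasFDerivAt (fun y => ⟪A y, y⟫ / ‖y‖ ^ 2)
      ((2 / ‖y‖ ^ 2) • (innerSL ℝ (A y) - (⟪A y, y⟫ / ‖y‖ ^ 2) • innerSL ℝ y)) y := by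
  simp_rw [div_eq_mul_inv]
  refine ((hasFDerivAt_inner_apply_self hA y).fun_mul
    (hasFDerivAt_inv_norm_sq hy)).congr_fderiv ?_
  have hy' : ‖y‖ ≠ 0 := norm_ne_zero_iff.2 hy
  ext v
  simp only [add_apply, smul_apply, coe_innerSL_apply, smul_eq_mul, nsmul_eq_mul,
    Nat.cast_ofNat, sub_apply]
  field_simp
  ring

theorem fderiv_inner_apply_self_div_norm_sq_apply (hA : (A : F →ₗ[ℝ] F).IsSymmetric) {y : F}
    (hy : y ≠ 0) (v : F) :
    fderiv ℝ (fun y => ⟪A y, y⟫ / ‖y‖ ^ 2) y v =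
      2 * (‖y‖ ^ 2)⁻¹ * (⟪A y, v⟫ - ⟪A y, y⟫ * ⟪y, v⟫ * (‖y‖ ^ 2)⁻¹) := by
  rw [(hasFDerivAt_inner_apply_self_div_norm_sq hA hy).fderiv]
  simp only [smul_apply, sub_apply, coe_innerSL_apply, smul_eq_mul]
  ring

theorem fderiv_fderiv_inner_apply_self_div_norm_sq_apply (hA : (A : F →ₗ[ℝ] F).IsSymmetric)
    {x : F} (hx : ‖x‖ = 1) (v : F) :
    fderiv ℝ (fun y => fderiv ℝ (fun y => ⟪A y, y⟫ / ‖y‖ ^ 2) y v) x v =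
      2 * (⟪A v, v⟫ - 4 * ⟪A x, v⟫ * ⟪x, v⟫ + 4 * ⟪A x, x⟫ * ⟪x, v⟫ ^ 2
        - ⟪A x, x⟫ * ‖v‖ ^ 2) := by
  have hx0 : x ≠ 0 := norm_ne_zero_iff.1 (by rw [hx]; norm_num)
  have hpartial : (fun y => fderiv ℝ (fun y => ⟪A y, y⟫ / ‖y‖ ^ 2) y v) =ᶠ[nhds x]
      fun y => 2 * (‖y‖ ^ 2)⁻¹ * (⟪A y, v⟫ - ⟪A y, y⟫ * ⟪y, v⟫ * (‖y‖ ^ 2)⁻¹) :=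
    Filter.eventually_of_mem (isOpen_ne.mem_nhds hx0) fun y hy =>
      fderiv_inner_apply_self_div_norm_sq_apply hA hy v
  have hAv := A.hasFDerivAt.inner ℝ (hasFDerivAt_const v x)
  have hv : HasFDerivAt (fun y => ⟪y, v⟫) _ x := (hasFDerivAt_id x).inner ℝ (hasFDerivAt_const v x)
  have hinv := hasFDerivAt_inv_norm_sq hx0
  have hderiv := (hinv.const_mul 2).fun_mul
    (hAv.fun_sub (((hasFDerivAt_inner_apply_self hA x).fun_mul hv).fun_mul hinv))
  rw [hpartial.fderiv_eq, hderiv.fderiv]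
  simp only [hx, one_pow, inv_one, mul_one, real_inner_comm x, div_one, neg_smul, smul_neg,
    id_eq, smul_add, one_smul, add_apply, smul_apply, sub_apply, comp_apply, prod_apply,
    zero_apply, fderivInnerCLM_apply, inner_zero_right, zero_add, neg_apply, coe_innerSL_apply,
    smul_eq_mul, id_apply, real_inner_self_eq_norm_sq, nsmul_eq_mul, Nat.cast_ofNat]
  ring

theorem sum_fderiv_fderiv_inner_apply_self_div_norm_sq {ι : Type*} [Fintype ι]
    (b : OrthonormalBasis ι ℝ F) (hA : (A : F →ₗ[ℝ] F).IsSymmetric) {x : F} (hx : ‖x‖ = 1) :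
    ∑ i, fderiv ℝ (fun y => fderiv ℝ (fun y => ⟪A y, y⟫ / ‖y‖ ^ 2) y (b i)) x (b i) =
      2 * (LinearMap.trace ℝ F A - Fintype.card ι * ⟪A x, x⟫) := by
  have hAx : ∑ i, ⟪A x, b i⟫ * ⟪x, b i⟫ = ⟪A x, x⟫ := by
    simpa only [real_inner_comm x] using b.sum_inner_mul_inner (A x) x
  have hxx : ∑ i, ⟪x, b i⟫ ^ 2 = 1 := by
    simpa only [sq, real_inner_comm x, real_inner_self_eq_norm_sq, hx, one_pow, mul_one]
      using b.sum_inner_mul_inner x x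
  have htrace : ∑ i, ⟪A (b i), b i⟫ = LinearMap.trace ℝ F A := by
    simp only [LinearMap.trace_eq_sum_inner _ b, ContinuousLinearMap.coe_coe,
      real_inner_comm (A _)]
  simp only [fderiv_fderiv_inner_apply_self_div_norm_sq_apply hA hx, b.norm_eq_one,
    Finset.sum_add_distrib, Finset.sum_sub_distrib, ← Finset.mul_sum, mul_assoc, hAx, hxx,
    htrace, one_pow, Finset.sum_const, Finset.card_univ, nsmul_eq_mul]
  ring

theorem real_inner_sub_smul_sub_smul_of_norm_eq_one {x : F} (hx : ‖x‖ = 1) (u w : F) :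
    ⟪u - ⟪u, x⟫ • x, w - ⟪w, x⟫ • x⟫ = ⟪u, w⟫ - ⟪u, x⟫ * ⟪w, x⟫ := by
  simp only [inner_sub_left, inner_sub_right, real_inner_smul_left, real_inner_smul_right,
    real_inner_self_eq_norm_sq, hx, real_inner_comm x]
  ring

variable [CompleteSpace F]

theorem hasGradientAt_inner_apply_self_div_norm_sq (hA : (A : F →ₗ[ℝ] F).IsSymmetric) {y : F}
    (hy : y ≠ 0) :
    HasGradientAt (fun y => ⟪A y, y⟫ / ‖y‖ ^ 2)
      ((2 / ‖y‖ ^ 2) • (A y - (⟪A y, y⟫ / ‖y‖ ^ 2) • y)) y := by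
  rw [hasGradientAt_iff_hasFDerivAt]
  refine (hasFDerivAt_inner_apply_self_div_norm_sq hA hy).congr_fderiv ?_
  ext v
  simp

theorem inner_gradient_inner_apply_self_div_norm_sq {B : F →L[ℝ] F}
    (hA : (A : F →ₗ[ℝ] F).IsSymmetric) (hB : (B : F →ₗ[ℝ] F).IsSymmetric) {x : F}
    (hx : ‖x‖ = 1) :
    ⟪gradient (fun y => ⟪A y, y⟫ / ‖y‖ ^ 2) x, gradient (fun y => ⟪B y, y⟫ / ‖y‖ ^ 2) x⟫ =
      4 * (⟪A x, B x⟫ - ⟪A x, x⟫ * ⟪B x, x⟫) := by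
  have hx0 : x ≠ 0 := norm_ne_zero_iff.1 (by rw [hx]; norm_num)
  rw [(hasGradientAt_inner_apply_self_div_norm_sq hA hx0).gradient,
    (hasGradientAt_inner_apply_self_div_norm_sq hB hx0).gradient]
  simp only [hx, one_pow, div_one, real_inner_smul_left, real_inner_smul_right,
    real_inner_sub_smul_sub_smul_of_norm_eq_one hx]
  ring

end QuadraticFormOverNormSq

theorem lap_inner_apply_self_div_norm_sq {d : ℕ}
    {A : EuclideanSpace ℝ (Fin d) →L[ℝ] EuclideanSpace ℝ (Fin d)}
    (hA : (A : EuclideanSpace ℝ (Fin d) →ₗ[ℝ] EuclideanSpace ℝ (Fin d)).IsSymmetric)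
    {x : EuclideanSpace ℝ (Fin d)} (hx : ‖x‖ = 1) :
    lap (fun y => ⟪A y, y⟫ / ‖y‖ ^ 2) x =
      2 * (LinearMap.trace ℝ _ (A : EuclideanSpace ℝ (Fin d) →ₗ[ℝ] _) - d * ⟪A x, x⟫) := by
  simpa [lap, EuclideanSpace.basisFun_apply] using
    sum_fderiv_fderiv_inner_apply_self_div_norm_sq (EuclideanSpace.basisFun (Fin d) ℝ) hA hx

section BlockProjection

variable {ι : Type*} [DecidableEq ι]

noncomputable def blockProj (S : Finset ι) : EuclideanSpace ℝ ι →L[ℝ] EuclideanSpace ℝ ι :=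
  (EuclideanSpace.equiv ι ℝ).symm.toContinuousLinearMap ∘L
    ContinuousLinearMap.pi fun j => if j ∈ S then EuclideanSpace.proj j else 0

theorem blockProj_apply (S : Finset ι) (y : EuclideanSpace ℝ ι) (j : ι) :
    blockProj S y j = if j ∈ S then y j else 0 := by
  simp only [blockProj]
  split_ifs <;> simp [*]

variable [Fintype ι]

theorem inner_blockProj_left (S : Finset ι) (u v : EuclideanSpace ℝ ι) :
    ⟪blockProj S u, v⟫ = ∑ j ∈ S, u j * v j := by
  simp [PiLp.inner_apply, blockProj_apply, Finset.sum_ite_mem, mul_comm]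

theorem blockProj_isSymmetric (S : Finset ι) :
    (blockProj S : EuclideanSpace ℝ ι →ₗ[ℝ] EuclideanSpace ℝ ι).IsSymmetric := fun u v => by
  rw [ContinuousLinearMap.coe_coe, inner_blockProj_left, real_inner_comm, inner_blockProj_left]
  simp only [mul_comm]

theorem inner_blockProj_self (S : Finset ι) (y : EuclideanSpace ℝ ι) :
    ⟪blockProj S y, y⟫ = ∑ j ∈ S, y j ^ 2 := by
  simp [inner_blockProj_left, sq]

theorem inner_blockProj_blockProj (S T : Finset ι) (y : EuclideanSpace ℝ ι) :
    ⟪blockProj S y, blockProj T y⟫ = ∑ j ∈ S ∩ T, y j ^ 2 := by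
  simp [inner_blockProj_left, blockProj_apply, Finset.sum_ite_mem, sq]

theorem trace_blockProj (S : Finset ι) :
    LinearMap.trace ℝ _ (blockProj S : EuclideanSpace ℝ ι →ₗ[ℝ] EuclideanSpace ℝ ι) = S.card := by
  rw [LinearMap.trace_eq_sum_inner _ (EuclideanSpace.basisFun ι ℝ)]
  simp [real_inner_comm _ (EuclideanSpace.single _ _), inner_blockProj_left]

end BlockProjection

theorem stmt_9_general (d k : ℕ) (p : Fin k → ℕ)
    (B : Fin k → Finset (Fin d))
    (hdisj : ∀ m l, m ≠ l → Disjoint (B m) (B l))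
    (hcard : ∀ m, (B m).card = p m)
    (m l : Fin k) (x : EuclideanSpace ℝ (Fin d)) (hx : ‖x‖ = 1) :
    lap (fun y => (∑ j ∈ B m, y j ^ 2) / ‖y‖ ^ 2) x =
      2 * ((p m : ℝ) - d * ∑ j ∈ B m, x j ^ 2) ∧
    ⟪gradient (fun y : EuclideanSpace ℝ (Fin d) => (∑ j ∈ B m, y j ^ 2) / ‖y‖ ^ 2) x,
      gradient (fun y : EuclideanSpace ℝ (Fin d) => (∑ j ∈ B l, y j ^ 2) / ‖y‖ ^ 2) x⟫ =
      4 * (∑ j ∈ B m, x j ^ 2) * ((if m = l then 1 else 0) - ∑ j ∈ B l, x j ^ 2) := by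
  simp only [← inner_blockProj_self]
  refine ⟨?_, ?_⟩
  · rw [lap_inner_apply_self_div_norm_sq (blockProj_isSymmetric _) hx, trace_blockProj, hcard]
  · rw [inner_gradient_inner_apply_self_div_norm_sq (blockProj_isSymmetric _)
      (blockProj_isSymmetric _) hx, inner_blockProj_blockProj]
    split_ifs with hml
    · subst hml
      simp only [Finset.inter_self, inner_blockProj_self]
      ring
    · rw [Finset.disjoint_iff_inter_eq_empty.1 (hdisj m l hml), Finset.sum_empty]
      ring

/-- Partition `{1,…,d}` into disjoint blocks `B₁,…,B_k` of sizes `p₁,…,p_k`, let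
`u_m(y) = Σ_{j ∈ B_m} y_j²` and `X̂_m(y) = u_m(y)/‖y‖²`. Then for `‖x‖ = 1`:
`ΔX̂_m(x) = 2(p_m - d·u_m(x))` and `⟪∇X̂_m(x), ∇X̂_l(x)⟫ = 4 u_m(x)(δ_{ml} - u_l(x))`. -/
theorem stmt_9 (d k : ℕ) (hd : 1 ≤ d) (p : Fin k → ℕ)
    (B : Fin k → Finset (Fin d))
    (hdisj : ∀ m l, m ≠ l → Disjoint (B m) (B l))
    (hcover : ∀ j : Fin d, ∃ m, j ∈ B m)
    (hcard : ∀ m, (B m).card = p m)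
    (m l : Fin k) (x : EuclideanSpace ℝ (Fin d)) (hx : ‖x‖ = 1) :
    lap (fun y => (∑ j ∈ B m, y j ^ 2) / ‖y‖ ^ 2) x =
      2 * ((p m : ℝ) - d * ∑ j ∈ B m, x j ^ 2) ∧
    ⟪gradient (fun y : EuclideanSpace ℝ (Fin d) => (∑ j ∈ B m, y j ^ 2) / ‖y‖ ^ 2) x,
      gradient (fun y : EuclideanSpace ℝ (Fin d) => (∑ j ∈ B l, y j ^ 2) / ‖y‖ ^ 2) x⟫ =
      4 * (∑ j ∈ B m, x j ^ 2) * ((if m = l then 1 else 0) - ∑ j ∈ B l, x j ^ 2) :=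
  stmt_9_general d k p B hdisj hcard m l x hx
end

section
/- Let M be an n×n complex matrix and let P(t) = det(M - t·I) with derivative P'. Then for all s, t ∈ ℂ with s ≠ t, P(s) ≠ 0 and P(t) ≠ 0, one has trace( M² · (M - s·I)⁻¹ · (M - t·I)⁻¹ ) = n - ( s²·P'(s)/P(s) - t²·P'(t)/P(t) ) / (s - t). -/
open Matrix Polynomial

lemma deriv_det_shift (n : ℕ) (M : Matrix (Fin n) (Fin n) ℂ) (s : ℂ)
    (hs : (M - s • (1 : Matrix (Fin n) (Fin n) ℂ)).det ≠ 0) :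
    deriv (fun x : ℂ => (M - x • (1 : Matrix (Fin n) (Fin n) ℂ)).det) s
      = -((M - s • (1 : Matrix (Fin n) (Fin n) ℂ)).det *
          Matrix.trace (M - s • (1 : Matrix (Fin n) (Fin n) ℂ))⁻¹) := by
  set A := M - s • (1 : Matrix (Fin n) (Fin n) ℂ) with hA
  have hAu : IsUnit A.det := isUnit_iff_ne_zero.mpr hs
  set E : ℂ[X] := (Matrix.det (1 + (X : ℂ[X]) • (A⁻¹).map C)).divX.divX with hE
  set q : ℂ[X] := C A.det * (1 + C (Matrix.trace A⁻¹) * X + E * X ^ 2) with hq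
  have key : ∀ x : ℂ, (M - x • (1 : Matrix (Fin n) (Fin n) ℂ)).det = q.eval (s - x) := by
    intro x
    have hm : M - x • (1 : Matrix (Fin n) (Fin n) ℂ) = A * (1 + (s - x) • A⁻¹) := by
      rw [Matrix.mul_add, Matrix.mul_smul, Matrix.mul_nonsing_inv _ hAu, Matrix.mul_one, hA]
      rw [sub_smul]
      abel
    rw [hm, Matrix.det_mul, Matrix.det_one_add_smul, hq]
    simp only [eval_mul, eval_add, eval_one, eval_C, eval_X, eval_pow, ← hE]
  have hderiv : HasDerivAt (fun x : ℂ => q.eval (s - x)) (q.derivative.eval (s - s) * (0 - 1)) s := by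
    exact (q.hasDerivAt (s - s)).comp s ((hasDerivAt_const s s).sub (hasDerivAt_id s))
  have hval : q.derivative.eval (s - s) * (0 - 1) = -(A.det * Matrix.trace A⁻¹) := by
    have h0 : q.derivative.eval 0 = q.coeff 1 := by
      rw [← coeff_zero_eq_eval_zero, coeff_derivative]
      simp
    have h1 : q.coeff 1 = A.det * Matrix.trace A⁻¹ := by
      rw [hq]
      rw [coeff_C_mul]
      simp [coeff_one, Polynomial.coeff_mul_X_pow', coeff_C]
    rw [sub_self, h0, h1]; ring
  have := hderiv.deriv
  rw [hval] at this
  have : deriv (fun x : ℂ => q.eval (s - x)) s = -(A.det * Matrix.trace A⁻¹) := this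
  rw [← this]
  congr 1
  funext x
  exact key x

/-- For an `n×n` complex matrix `M` with `P(t) = det(M - tI)`, for `s ≠ t` with `P(s) ≠ 0`
and `P(t) ≠ 0`:
`trace(M²(M - sI)⁻¹(M - tI)⁻¹) = n - (s²P'(s)/P(s) - t²P'(t)/P(t))/(s - t)`. -/
theorem stmt_13 (n : ℕ) (M : Matrix (Fin n) (Fin n) ℂ)
    (P : ℂ → ℂ) (hP : P = fun t => (M - t • (1 : Matrix (Fin n) (Fin n) ℂ)).det)
    (s t : ℂ) (hst : s ≠ t) (hPs : P s ≠ 0) (hPt : P t ≠ 0) :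
    Matrix.trace (M ^ 2 * (M - s • (1 : Matrix (Fin n) (Fin n) ℂ))⁻¹ *
        (M - t • (1 : Matrix (Fin n) (Fin n) ℂ))⁻¹) =
      (n : ℂ) - (s ^ 2 * deriv P s / P s - t ^ 2 * deriv P t / P t) / (s - t) := by
  set A := M - s • (1 : Matrix (Fin n) (Fin n) ℂ) with hA
  set B := M - t • (1 : Matrix (Fin n) (Fin n) ℂ) with hB
  have hdA : A.det ≠ 0 := by rw [hP] at hPs; exact hPs
  have hdB : B.det ≠ 0 := by rw [hP] at hPt; exact hPt
  have hAu : IsUnit A.det := isUnit_iff_ne_zero.mpr hdA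
  have hBu : IsUnit B.det := isUnit_iff_ne_zero.mpr hdB
  have hds : deriv P s = -(A.det * Matrix.trace A⁻¹) := by
    rw [hP]; exact deriv_det_shift n M s hdA
  have hdt : deriv P t = -(B.det * Matrix.trace B⁻¹) := by
    rw [hP]; exact deriv_det_shift n M t hdB
  have hPsv : P s = A.det := by rw [hP]
  have hPtv : P t = B.det := by rw [hP]
  -- commuting facts
  have hAB : A * B = B * A := by
    rw [hA, hB]
    simp only [Matrix.sub_mul, Matrix.mul_sub, Matrix.smul_mul, Matrix.mul_smul,
      Matrix.mul_one, Matrix.one_mul, smul_smul]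
    module
  have hBAinv : B * A⁻¹ = A⁻¹ * B := by
    have := congrArg (fun X => A⁻¹ * X * A⁻¹) hAB
    simp only [← Matrix.mul_assoc] at this
    rw [Matrix.nonsing_inv_mul _ hAu, Matrix.one_mul] at this
    rw [Matrix.mul_assoc, Matrix.mul_assoc, Matrix.mul_nonsing_inv _ hAu, Matrix.mul_one] at this
    exact this
  -- key matrix identity
  have hM2 : M ^ 2 = A * B + ((s + t) • M - (s * t) • (1 : Matrix (Fin n) (Fin n) ℂ)) := by
    rw [hA, hB]
    simp only [Matrix.sub_mul, Matrix.mul_sub, Matrix.smul_mul, Matrix.mul_smul, Matrix.mul_one,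
      Matrix.one_mul, smul_smul, sq]
    abel_nf
    module
  have hsplit : (s - t) • ((s + t) • M - (s * t) • (1 : Matrix (Fin n) (Fin n) ℂ))
      = s ^ 2 • B - t ^ 2 • A := by
    rw [hA, hB]
    module
  have hmain : (s - t) • (M ^ 2 * A⁻¹ * B⁻¹)
      = (s - t) • (1 : Matrix (Fin n) (Fin n) ℂ) + s ^ 2 • A⁻¹ - t ^ 2 • B⁻¹ := by
    rw [hM2, Matrix.add_mul, Matrix.add_mul, smul_add]
    have e1 : A * B * A⁻¹ * B⁻¹ = 1 := by
      rw [Matrix.mul_assoc A B A⁻¹, hBAinv, ← Matrix.mul_assoc, Matrix.mul_nonsing_inv _ hAu,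
        Matrix.one_mul, Matrix.mul_nonsing_inv _ hBu]
    have e2 : (s - t) • (((s + t) • M - (s * t) • (1 : Matrix (Fin n) (Fin n) ℂ)) * A⁻¹ * B⁻¹)
        = s ^ 2 • A⁻¹ - t ^ 2 • B⁻¹ := by
      rw [← Matrix.smul_mul, ← Matrix.smul_mul, hsplit, Matrix.sub_mul, Matrix.sub_mul,
        Matrix.smul_mul, Matrix.smul_mul, Matrix.smul_mul, Matrix.smul_mul]
      rw [hBAinv, Matrix.mul_assoc A⁻¹ B B⁻¹, Matrix.mul_nonsing_inv _ hBu, Matrix.mul_one,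
        Matrix.mul_nonsing_inv _ hAu, Matrix.one_mul]
    rw [e1, e2]
    abel
  have htr := congrArg Matrix.trace hmain
  simp only [Matrix.trace_smul, Matrix.trace_add, Matrix.trace_sub, Matrix.trace_one,
    smul_eq_mul, Fintype.card_fin] at htr
  rw [hds, hdt, hPsv, hPtv]
  have hstne : s - t ≠ 0 := sub_ne_zero.mpr hst
  have e1 : s ^ 2 * -(A.det * A⁻¹.trace) / A.det = -(s ^ 2 * A⁻¹.trace) := by
    field_simp
  have e2 : t ^ 2 * -(B.det * B⁻¹.trace) / B.det = -(t ^ 2 * B⁻¹.trace) := by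
    field_simp
  rw [e1, e2]
  apply mul_left_cancel₀ hstne
  rw [mul_sub, mul_div_cancel₀ _ hstne]
  linear_combination htr
end

section
/- Let d ≥ 1, let Q ∈ ℂ[x₁, …, x_d] be a squarefree polynomial, let g = (g^{ij}) be a d×d matrix with entries in ℂ[x₁, …, x_d], and suppose there exist polynomials L₁, …, L_d ∈ ℂ[x₁, …, x_d] such that for every i, Σ_j g^{ij} · ∂_j Q = L_i · Q. Then Q divides det(g) in ℂ[x₁, …, x_d]. -/
/-!
Write `∇Q` for the gradient of `Q`. The boundary equation says `g ∇Q = Q L`; multiplying by the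
adjugate of `g` gives `det g · ∂_j Q = Q · (adj g L)_j`, so `Q ∣ det g · ∂_j Q` for every `j`.
Since `Q` is squarefree it suffices that every prime factor `p` of `Q` divides `det g`. Writing
`Q = p R` with `p ∤ R`, we get `p ∣ det g · ∂_j p · R`. In characteristic zero a nonconstant `p`
has some `∂_j p ≠ 0` of smaller degree in `x_j`, so `p ∤ ∂_j p`, and primality forces `p ∣ det g`.
-/

open MvPolynomial Matrix

theorem Squarefree.dvd_of_forall_prime_dvd {M : Type*} [CommMonoidWithZero M]
    [UniqueFactorizationMonoid M] {Q : M} (hQ : Squarefree Q) {D : M}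
    (hD : ∀ p, Prime p → p ∣ Q → p ∣ D) : Q ∣ D := by
  induction Q using UniqueFactorizationMonoid.induction_on_prime generalizing D with
  | h₁ => exact (hQ 0 (by simp)).dvd
  | h₂ x hx => exact hx.dvd
  | h₃ a p _ hp ih =>
    obtain ⟨D', rfl⟩ := hD p hp (dvd_mul_right p a)
    have hpa : ¬ p ∣ a := fun hpa => hp.not_isUnit (hQ p (mul_dvd_mul_left p hpa))
    refine mul_dvd_mul_left p (ih hQ.of_mul_right fun q hq hqa => ?_)
    refine (hq.dvd_mul.mp (hD q hq (dvd_mul_of_dvd_right hqa p))).resolve_left fun hqp => ?_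
    exact hpa (((hq.dvd_prime_iff_associated hp).mp hqp).symm.dvd.trans hqa)

theorem Matrix.dvd_det_mul_of_mulVec_eq_smul {n A : Type*} [Fintype n] [DecidableEq n]
    [CommRing A] {g : Matrix n n A} {v L : n → A} {Q : A} (h : g *ᵥ v = Q • L) (j : n) :
    Q ∣ g.det * v j := by
  have hadj : g.det • v = Q • (g.adjugate *ᵥ L) := by
    rw [← mulVec_smul, ← h, mulVec_mulVec, adjugate_mul, smul_mulVec, one_mulVec]
  exact ⟨_, congrFun hadj j⟩

theorem Prime.dvd_of_dvd_mul_derivation {R A : Type*} [CommSemiring R] [CommRing A] [Algebra R A]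
    (D : Derivation R A A) {p Q a : A} (hp : Prime p) (hQ : Squarefree Q) (hpQ : p ∣ Q)
    (hpD : ¬ p ∣ D p) (h : Q ∣ a * D Q) : p ∣ a := by
  obtain ⟨q, rfl⟩ := hpQ
  have hpq : ¬ p ∣ q := fun hpq => hp.not_isUnit (hQ p (mul_dvd_mul_left p hpq))
  have hleibniz : a * D (p * q) = p * (a * D q) + a * D p * q := by
    rw [Derivation.leibniz, smul_eq_mul, smul_eq_mul]
    ring
  have hdiv : p ∣ a * D p * q :=
    (dvd_add_right (dvd_mul_right p _)).mp (hleibniz ▸ (dvd_mul_right p q).trans h)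
  exact (hp.dvd_mul.mp ((hp.dvd_mul.mp hdiv).resolve_right hpq)).resolve_right hpD

namespace MvPolynomial

variable {σ R : Type*}

theorem degreeOf_pderiv_lt [CommSemiring R] {j : σ} {p : MvPolynomial σ R}
    (hp : degreeOf j p ≠ 0) : degreeOf j (pderiv j p) < degreeOf j p := by
  rw [degreeOf_lt_iff (Nat.pos_of_ne_zero hp)]
  intro m hm
  have hcoeff : coeff (m + Finsupp.single j 1) p ≠ 0 := by
    intro h0
    exact mem_support_iff.mp hm (by rw [coeff_pderiv, h0, zero_mul])
  have := monomial_le_degreeOf j (mem_support_iff.mpr hcoeff)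
  simp only [Finsupp.add_apply, Finsupp.single_eq_same] at this
  omega

theorem pderiv_ne_zero_of_degreeOf_ne_zero [CommRing R] [IsDomain R] [CharZero R] {j : σ}
    {p : MvPolynomial σ R} (hp : degreeOf j p ≠ 0) : pderiv j p ≠ 0 := by
  obtain ⟨m, hm, hmj⟩ := Finset.exists_mem_eq_sup p.support
    (support_nonempty.mpr (ne_zero_of_degreeOf_ne_zero hp)) (fun m => m j)
  rw [← degreeOf_eq_sup] at hmj
  have hle : Finsupp.single j 1 ≤ m := Finsupp.single_le_iff.mpr (by omega)
  intro h0
  have := coeff_pderiv (i := j) p (m - Finsupp.single j 1)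
  rw [h0, coeff_zero, tsub_add_cancel_of_le hle, eq_comm, mul_eq_zero] at this
  exact this.elim (mem_support_iff.mp hm) (Nat.cast_add_one_ne_zero _)

theorem not_dvd_pderiv_self [CommRing R] [IsDomain R] [CharZero R] {j : σ}
    {p : MvPolynomial σ R} (hp : degreeOf j p ≠ 0) : ¬ p ∣ pderiv j p := by
  rintro ⟨c, hc⟩
  have hc0 : c ≠ 0 := by
    rintro rfl
    exact pderiv_ne_zero_of_degreeOf_ne_zero hp (by rw [hc, mul_zero])
  have := degreeOf_pderiv_lt hp
  rw [hc, degreeOf_mul_eq (ne_zero_of_degreeOf_ne_zero hp) hc0] at this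
  omega

theorem exists_not_dvd_pderiv_self [Field R] [CharZero R] {p : MvPolynomial σ R}
    (hp : ¬ IsUnit p) (hp0 : p ≠ 0) : ∃ j, ¬ p ∣ pderiv j p := by
  obtain ⟨j, hj⟩ : p.vars.Nonempty := by
    refine Finset.nonempty_iff_ne_empty.mpr fun hvars => hp ?_
    rw [vars_eq_empty_iff_eq_C] at hvars
    rw [hvars] at hp0 ⊢
    exact (isUnit_iff_ne_zero.mpr fun h => hp0 (by rw [h, map_zero])).map C
  exact ⟨j, not_dvd_pderiv_self (mem_vars_iff_degreeOf_ne_zero.mp hj)⟩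

end MvPolynomial

theorem stmt_15_general (d : ℕ) (Q : MvPolynomial (Fin d) ℂ) (hQ : Squarefree Q)
    (g : Matrix (Fin d) (Fin d) (MvPolynomial (Fin d) ℂ))
    (L : Fin d → MvPolynomial (Fin d) ℂ)
    (h : ∀ i, ∑ j, g i j * pderiv j Q = L i * Q) :
    Q ∣ g.det := by
  have hgrad : g *ᵥ (fun j => pderiv j Q) = Q • L := by
    funext i
    rw [Pi.smul_apply, smul_eq_mul, mul_comm, ← h i]
    rfl
  refine hQ.dvd_of_forall_prime_dvd fun p hp hpQ => ?_
  obtain ⟨j, hj⟩ := exists_not_dvd_pderiv_self hp.not_isUnit hp.ne_zero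
  exact hp.dvd_of_dvd_mul_derivation (R := ℂ) (pderiv j) hQ hpQ hj
    (Matrix.dvd_det_mul_of_mulVec_eq_smul hgrad j)

/-- If `Q ∈ ℂ[x₁,…,x_d]` is squarefree and the matrix of polynomials `g = (g^{ij})` satisfies
the boundary equation `Σ_j g^{ij} ∂_j Q = L_i Q` for some polynomials `L_i`, then `Q` divides
`det g`. -/
theorem stmt_15 (d : ℕ) (hd : 1 ≤ d) (Q : MvPolynomial (Fin d) ℂ) (hQ : Squarefree Q)
    (g : Matrix (Fin d) (Fin d) (MvPolynomial (Fin d) ℂ))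
    (L : Fin d → MvPolynomial (Fin d) ℂ)
    (h : ∀ i, ∑ j, g i j * pderiv j Q = L i * Q) :
    Q ∣ g.det :=
  stmt_15_general d Q hQ g L h
end

section
/- Let H be a real inner product space which is a Hilbert space, let (V_n) be an increasing sequence of finite-dimensional subspaces of H whose union D = ⋃_n V_n is dense in H, and let T : H → H be a linear map such that T(V_n) ⊆ V_n for every n and ⟪T f, g⟫ = ⟪f, T g⟫ for all f, g ∈ D. Then there exists an orthonormal family (e_k) of vectors of H, all belonging to D, whose closed linear span is H, together with real numbers (λ_k), such that T e_k = λ_k e_k for every k. In particular H admits a complete orthonormal system of eigenvectors of T lying in ⋃_n V_n. -/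
/-!
Split `V n` into the orthogonal increments `V n ⊖ V (n - 1)`. Symmetry of `T` on `⋃ n, V n`
makes each increment `T`-invariant, so the restriction of `T` to it is a symmetric operator on
a finite-dimensional space and has an orthonormal eigenbasis. The increments are mutually
orthogonal and together span every `V n`, so the union of these eigenbases is an orthonormal
family whose span contains the dense set `⋃ n, V n`.
-/

open RealInnerProductSpace
open scoped InnerProductSpace

variable {𝕜 E : Type*} [RCLike 𝕜] [NormedAddCommGroup E] [InnerProductSpace 𝕜 E]

namespace Submodule

def orthogonalIncrement (V : ℕ → Submodule 𝕜 E) : ℕ → Submodule 𝕜 E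
  | 0 => V 0
  | n + 1 => (V n)ᗮ ⊓ V (n + 1)

theorem mapsTo_orthogonal_inf {T : E →ₗ[𝕜] E} {U W : Submodule 𝕜 E}
    (hU : ∀ u ∈ U, T u ∈ U) (hW : ∀ w ∈ W, T w ∈ W)
    (hT : ∀ u ∈ U, ∀ w ∈ W, ⟪T u, w⟫_𝕜 = ⟪u, T w⟫_𝕜) :
    ∀ w ∈ Uᗮ ⊓ W, T w ∈ Uᗮ ⊓ W := by
  rintro w ⟨hwU, hwW⟩
  refine ⟨fun u hu => ?_, hW w hwW⟩
  rw [← hT u hu w hwW]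
  exact hwU _ (hU u hu)

theorem span_range_coe_orthonormalBasis {ι : Type*} [Fintype ι] {W : Submodule 𝕜 E}
    (b : OrthonormalBasis ι 𝕜 W) : span 𝕜 (Set.range fun i => (b i : E)) = W := by
  have : (Set.range fun i => (b i : E)) = W.subtype '' Set.range b := Set.range_comp _ _
  rw [this, ← map_span, ← b.coe_toBasis, b.toBasis.span_eq, map_subtype_top]

variable {V : ℕ → Submodule 𝕜 E}

theorem orthogonalIncrement_le (n : ℕ) : orthogonalIncrement V n ≤ V n := by
  cases n with
  | zero => exact le_rfl
  | succ n => exact inf_le_right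

theorem isOrtho_orthogonalIncrement_of_lt (hV : Monotone V) {m n : ℕ} (hmn : m < n) :
    orthogonalIncrement V m ⟂ orthogonalIncrement V n := by
  obtain ⟨k, rfl⟩ : ∃ k, n = k + 1 := Nat.exists_eq_add_one.2 (by omega)
  exact (isOrtho_orthogonal_right (V k)).mono
    ((orthogonalIncrement_le m).trans (hV (Nat.le_of_lt_succ hmn))) inf_le_left

theorem orthogonalFamily_orthogonalIncrement (hV : Monotone V) :
    OrthogonalFamily 𝕜 (fun n => orthogonalIncrement V n)
      fun n => (orthogonalIncrement V n).subtypeₗᵢ :=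
  OrthogonalFamily.of_pairwise fun _ _ hmn => hmn.lt_or_gt.elim
    (isOrtho_orthogonalIncrement_of_lt hV) fun h => (isOrtho_orthogonalIncrement_of_lt hV h).symm

theorem le_iSup_orthogonalIncrement [∀ n, (V n).HasOrthogonalProjection] (hV : Monotone V)
    (n : ℕ) : V n ≤ ⨆ k, orthogonalIncrement V k := by
  induction n with
  | zero => exact le_iSup (orthogonalIncrement V) 0
  | succ n ih =>
    rw [← sup_orthogonal_inf_of_hasOrthogonalProjection (hV n.le_succ)]
    exact sup_le ih (le_iSup (orthogonalIncrement V) (n + 1))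

theorem mapsTo_orthogonalIncrement {T : E →ₗ[𝕜] E} (hTV : ∀ n, ∀ v ∈ V n, T v ∈ V n)
    (hT : ∀ m n, ∀ u ∈ V m, ∀ w ∈ V n, ⟪T u, w⟫_𝕜 = ⟪u, T w⟫_𝕜) (n : ℕ) :
    ∀ w ∈ orthogonalIncrement V n, T w ∈ orthogonalIncrement V n := by
  cases n with
  | zero => exact hTV 0
  | succ n => exact mapsTo_orthogonal_inf (hTV n) (hTV (n + 1)) (hT n (n + 1))

end Submodule

theorem LinearMap.exists_orthonormalBasis_eigenvectors_of_mapsTo {T : E →ₗ[𝕜] E}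
    {W : Submodule 𝕜 E} [FiniteDimensional 𝕜 W] (hTW : ∀ w ∈ W, T w ∈ W)
    (hT : ∀ u ∈ W, ∀ w ∈ W, ⟪T u, w⟫_𝕜 = ⟪u, T w⟫_𝕜) :
    ∃ (d : ℕ) (b : OrthonormalBasis (Fin d) 𝕜 W) (μ : Fin d → ℝ),
      ∀ i, T (b i) = (μ i : 𝕜) • (b i : E) := by
  have hsym : (T.restrict hTW).IsSymmetric := fun u w => hT u u.2 w w.2
  refine ⟨_, hsym.eigenvectorBasis rfl, hsym.eigenvalues rfl, fun i => ?_⟩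
  exact congrArg Subtype.val (hsym.apply_eigenvectorBasis rfl i)

theorem stmt_18_general (H : Type) [NormedAddCommGroup H] [InnerProductSpace ℝ H]
    (V : ℕ → Submodule ℝ H) (hmono : Monotone V)
    (hfd : ∀ n, FiniteDimensional ℝ (V n))
    (hdense : Dense (⋃ n, (V n : Set H)))
    (T : H →ₗ[ℝ] H) (hTV : ∀ n, ∀ v ∈ V n, T v ∈ V n)
    (hsym : ∀ f ∈ ⋃ n, (V n : Set H), ∀ g ∈ ⋃ n, (V n : Set H), ⟪T f, g⟫ = ⟪f, T g⟫) :
    ∃ (ι : Type) (e : ι → H) (lam : ι → ℝ),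
      Orthonormal ℝ e ∧
      (∀ i, e i ∈ ⋃ n, (V n : Set H)) ∧
      (Submodule.span ℝ (Set.range e)).topologicalClosure = ⊤ ∧
      ∀ i, T (e i) = lam i • e i := by
  let W := Submodule.orthogonalIncrement V
  have hWV (n : ℕ) : W n ≤ V n := Submodule.orthogonalIncrement_le n
  have hsymV : ∀ m n, ∀ u ∈ V m, ∀ w ∈ V n, ⟪T u, w⟫ = ⟪u, T w⟫ := fun m n u hu w hw =>
    hsym u (Set.mem_iUnion_of_mem m hu) w (Set.mem_iUnion_of_mem n hw)
  have (n : ℕ) : FiniteDimensional ℝ (W n) := Submodule.finiteDimensional_of_le (hWV n)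
  have (n : ℕ) : (V n).HasOrthogonalProjection :=
    have := FiniteDimensional.complete ℝ (V n); inferInstance
  choose d b μ hb using fun n => T.exists_orthonormalBasis_eigenvectors_of_mapsTo
    (Submodule.mapsTo_orthogonalIncrement hTV hsymV n) fun u hu w hw =>
      hsymV n n u (hWV n hu) w (hWV n hw)
  let e (p : Σ n, Fin (d n)) : H := b p.1 p.2
  have hV_le_span (n : ℕ) : V n ≤ Submodule.span ℝ (Set.range e) :=
    calc V n ≤ ⨆ k, W k := Submodule.le_iSup_orthogonalIncrement hmono n
      _ ≤ Submodule.span ℝ (Set.range e) := iSup_le fun k =>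
        (Submodule.span_range_coe_orthonormalBasis (b k)).ge.trans
          (Submodule.span_mono (by rintro _ ⟨i, rfl⟩; exact ⟨⟨k, i⟩, rfl⟩))
  refine ⟨Σ n, Fin (d n), e, fun p => μ p.1 p.2, ?_, fun p => ?_, ?_, fun p => hb p.1 p.2⟩
  · exact (Submodule.orthogonalFamily_orthogonalIncrement hmono).orthonormal_sigma_orthonormal
      fun n => (b n).orthonormal
  · exact Set.mem_iUnion_of_mem p.1 (hWV p.1 (b p.1 p.2).2)
  · rw [← Submodule.dense_iff_topologicalClosure_eq_top]
    exact hdense.mono (Set.iUnion_subset hV_le_span)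

/-- Let `H` be a real Hilbert space, `(V_n)` an increasing sequence of finite-dimensional
subspaces whose union `D` is dense in `H`, and `T : H → H` a linear map with `T(V_n) ⊆ V_n`
which is symmetric on `D`. Then `H` admits a complete orthonormal family of eigenvectors of
`T` lying in `D`. -/
theorem stmt_18 (H : Type) [NormedAddCommGroup H] [InnerProductSpace ℝ H] [CompleteSpace H]
    (V : ℕ → Submodule ℝ H) (hmono : Monotone V)
    (hfd : ∀ n, FiniteDimensional ℝ (V n))
    (hdense : Dense (⋃ n, (V n : Set H)))
    (T : H →ₗ[ℝ] H) (hTV : ∀ n, ∀ v ∈ V n, T v ∈ V n)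
    (hsym : ∀ f ∈ ⋃ n, (V n : Set H), ∀ g ∈ ⋃ n, (V n : Set H), ⟪T f, g⟫ = ⟪f, T g⟫) :
    ∃ (ι : Type) (e : ι → H) (lam : ι → ℝ),
      Orthonormal ℝ e ∧
      (∀ i, e i ∈ ⋃ n, (V n : Set H)) ∧
      (Submodule.span ℝ (Set.range e)).topologicalClosure = ⊤ ∧
      ∀ i, T (e i) = lam i • e i :=
  stmt_18_general H V hmono hfd hdense T hTV hsym
end

section
/- Let n ≥ 1 be an integer. Define on ℝ³ \ {0} the degree-zero homogeneous functions X̂(y) = y₃/‖y‖ and Ŷ(y) = Re((y₁ + i y₂)^n)/‖y‖^n. Then for every x ∈ ℝ³ with ‖x‖ = 1: (i) ΔX̂(x) = -2 x₃ and ΔŶ(x) = -n(n+1) Ŷ(x); (ii) ⟪∇X̂(x), ∇Ŷ(x)⟫ = -n x₃ Ŷ(x); (iii) ‖∇Ŷ(x)‖² = n²( (1 - x₃²)^{n-1} - Ŷ(x)² ). Consequently the spherical Laplacian on S² restricted to functions of (X, Y) = (x₃, Re((x₁+ix₂)^n)) is the polynomial model with Γ(X,X) = 1-X², Γ(X,Y)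 = -nXY, Γ(Y,Y) = n²((1-X²)^{n-1} - Y²), L(X) = -2X, L(Y) = -n(n+1)Y. -/
open RealInnerProductSpace

/-- The Euclidean Laplacian on `ℝ³`: the sum of the second partial derivatives. -/
noncomputable def lap3 (f : EuclideanSpace ℝ (Fin 3) → ℝ)
    (x : EuclideanSpace ℝ (Fin 3)) : ℝ :=
  ∑ i, fderiv ℝ (fun y => fderiv ℝ f y (EuclideanSpace.single i 1)) x
    (EuclideanSpace.single i 1)

/-!
Both functions are `P y / ‖y‖ ^ k` for a harmonic polynomial `P`, homogeneous of degree `k`: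
`P = y₃` with `k = 1`, and `P = Re (y₁ + i y₂) ^ n` with `k = n`, which is harmonic because
`(1, i, 0)` is an isotropic vector. At a unit vector `x`, Euler's identity `⟪∇P, x⟫ = k P`
turns the Leibniz rules into `∇(P ‖·‖⁻ᵏ) = ∇P - k P x`, hence
`⟪∇(P ‖·‖⁻ᵏ), ∇(Q ‖·‖⁻ᵐ)⟫ = ⟪∇P, ∇Q⟫ - k m P Q`, and, since `Δ‖·‖⁻ᵏ = k (k - 1)` on the
sphere, `Δ(P ‖·‖⁻ᵏ) = k (k - 1) P - 2 k² P + ΔP = -k (k + 1) P`. Finally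
`‖∇ Re (y₁ + i y₂) ^ n‖² = n² |y₁ + i y₂| ^ (2 (n - 1))`.
-/

section InnerProductSpace

variable {E : Type*} [NormedAddCommGroup E] [InnerProductSpace ℝ E]

theorem hasFDerivAt_norm {y : E} (hy : y ≠ 0) :
    HasFDerivAt (fun z : E => ‖z‖) (‖y‖⁻¹ • innerSL ℝ y) y := by
  have h := (hasStrictFDerivAt_norm_sq y).hasFDerivAt.sqrt (by positivity)
  simp only [Real.sqrt_sq (norm_nonneg _)] at h
  convert h using 1
  ext v
  simp only [smul_apply, coe_innerSL_apply, smul_eq_mul, one_div, mul_inv_rev, nsmul_eq_mul,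
    Nat.cast_ofNat]
  field_simp

theorem hasFDerivAt_norm_pow_inv (m : ℕ) {y : E} (hy : y ≠ 0) :
    HasFDerivAt (fun z : E => (‖z‖ ^ m)⁻¹) (-(m / ‖y‖ ^ (m + 2)) • innerSL ℝ y) y := by
  have hy' : ‖y‖ ≠ 0 := norm_ne_zero_iff.mpr hy
  have h := (hasDerivAt_inv (pow_ne_zero m hy')).comp_hasFDerivAt y
    ((hasFDerivAt_norm hy).pow m)
  refine h.congr_fderiv ?_
  ext v
  rcases m with _ | m
  · simp
  · simp only [add_tsub_cancel_right, nsmul_eq_mul, Nat.cast_add, Nat.cast_one, neg_smul,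
      neg_apply, smul_apply, coe_innerSL_apply, smul_eq_mul, neg_inj]
    field_simp
    ring

theorem contDiffAt_norm_pow_inv (m : ℕ) {y : E} (hy : y ≠ 0) :
    ContDiffAt ℝ 2 (fun z : E => (‖z‖ ^ m)⁻¹) y :=
  ((contDiffAt_norm ℝ hy).pow m).inv (pow_ne_zero m (norm_ne_zero_iff.mpr hy))

variable {P Q : E → ℝ} {x : E}

theorem fderiv_mul_norm_pow_inv (hP : DifferentiableAt ℝ P x) (hx : ‖x‖ = 1) (k : ℕ) :
    fderiv ℝ (fun y => P y * (‖y‖ ^ k)⁻¹) x = fderiv ℝ P x - (k * P x) • innerSL ℝ x := by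
  have hρ := hasFDerivAt_norm_pow_inv k (ne_zero_of_norm_ne_zero (hx ▸ one_ne_zero))
  rw [fderiv_fun_mul hP hρ.differentiableAt, hρ.fderiv, hx]
  ext v
  simp only [one_pow, div_one, neg_smul, smul_neg, inv_one, one_smul, add_apply, neg_apply,
    smul_apply, coe_innerSL_apply, smul_eq_mul, sub_apply]
  ring

variable [CompleteSpace E]

theorem inner_gradient_eq_fderiv (v : E) : ⟪gradient P x, v⟫ = fderiv ℝ P x v :=
  InnerProductSpace.toDual_symm_apply

theorem gradient_norm_pow_inv (hx : ‖x‖ = 1) (k : ℕ) :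
    gradient (fun y : E => (‖y‖ ^ k)⁻¹) x = -(k : ℝ) • x := by
  refine (hasGradientAt_iff_hasFDerivAt.mpr ?_).gradient
  have hx0 : x ≠ 0 := ne_zero_of_norm_ne_zero (hx ▸ one_ne_zero)
  refine (hasFDerivAt_norm_pow_inv k hx0).congr_fderiv ?_
  ext v
  simp [InnerProductSpace.toDual_apply_apply, hx]

theorem gradient_mul_norm_pow_inv (hP : DifferentiableAt ℝ P x) (hx : ‖x‖ = 1) (k : ℕ) :
    gradient (fun y => P y * (‖y‖ ^ k)⁻¹) x = gradient P x - (k * P x) • x := by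
  rw [gradient, fderiv_mul_norm_pow_inv hP hx, map_sub, map_smul, gradient]
  congr
  exact (InnerProductSpace.toDual ℝ E).symm_apply_eq.mpr rfl

theorem inner_gradient_mul_norm_pow_inv {k m : ℕ}
    (hP : DifferentiableAt ℝ P x) (hQ : DifferentiableAt ℝ Q x)
    (hPk : fderiv ℝ P x x = k * P x) (hQm : fderiv ℝ Q x x = m * Q x) (hx : ‖x‖ = 1) :
    ⟪gradient (fun y => P y * (‖y‖ ^ k)⁻¹) x, gradient (fun y => Q y * (‖y‖ ^ m)⁻¹) x⟫ =
      ⟪gradient P x, gradient Q x⟫ - k * m * P x * Q x := by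
  have hxx : ⟪x, x⟫ = 1 := by rw [real_inner_self_eq_norm_sq, hx, one_pow]
  have hPx : ⟪gradient P x, x⟫ = k * P x := by rw [inner_gradient_eq_fderiv, hPk]
  have hQx : ⟪x, gradient Q x⟫ = m * Q x := by
    rw [real_inner_comm, inner_gradient_eq_fderiv, hQm]
  rw [gradient_mul_norm_pow_inv hP hx, gradient_mul_norm_pow_inv hQ hx]
  simp only [inner_sub_left, inner_sub_right, real_inner_smul_left, real_inner_smul_right,
    hPx, hQx, hxx]
  ring

end InnerProductSpace

section ComplexPower

variable {E : Type*} [NormedAddCommGroup E] [NormedSpace ℝ E] (L : E →L[ℝ] ℂ)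

theorem hasFDerivAt_re_mul_pow (d : ℂ) (m : ℕ) (y : E) :
    HasFDerivAt (fun z => (d * L z ^ m).re)
      (Complex.reCLM.comp ((d * m * L y ^ (m - 1)) • L)) y := by
  have h := Complex.reCLM.hasFDerivAt.comp y ((L.hasFDerivAt.pow m).const_mul d)
  refine h.congr_fderiv ?_
  ext v
  simp only [ContinuousLinearMap.comp_apply, Complex.reCLM_apply, smul_apply, smul_eq_mul,
    nsmul_eq_mul]
  ring_nf

theorem fderiv_re_pow (m : ℕ) (y : E) :
    fderiv ℝ (fun z => (L z ^ m).re) y = Complex.reCLM.comp ((m * L y ^ (m - 1)) • L) := by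
  simpa using (hasFDerivAt_re_mul_pow L 1 m y).fderiv

theorem fderiv_re_pow_apply_self (m : ℕ) (y : E) :
    fderiv ℝ (fun z => (L z ^ m).re) y y = m * (L y ^ m).re := by
  rw [fderiv_re_pow]
  rcases m with _ | m
  · simp
  · simp [pow_succ, mul_assoc]

theorem fderiv_re_pow_apply_of_map_eq_zero (m : ℕ) (y : E) {v : E} (hv : L v = 0) :
    fderiv ℝ (fun z => (L z ^ m).re) y v = 0 := by
  simp [fderiv_re_pow, hv]

theorem contDiff_re_pow (m : ℕ) {n : WithTop ℕ∞} : ContDiff ℝ n fun z => (L z ^ m).re :=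
  Complex.reCLM.contDiff.comp (L.contDiff.pow m)

end ComplexPower

namespace EuclideanSpace

variable {ι : Type*} [Fintype ι] [DecidableEq ι]

theorem gradient_apply (f : EuclideanSpace ℝ ι → ℝ) (x : EuclideanSpace ℝ ι) (i : ι) :
    gradient f x i = fderiv ℝ f x (single i 1) := by
  rw [← inner_gradient_eq_fderiv, inner_single_right]
  simp

theorem gradient_coord (i : ι) (x : EuclideanSpace ℝ ι) :
    gradient (fun y : EuclideanSpace ℝ ι => y i) x = single i 1 := by
  ext j
  rw [gradient_apply, (PiLp.hasFDerivAt_apply (𝕜 := ℝ) 2 x i).fderiv]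
  simp [PiLp.single_apply, eq_comm]

theorem inner_gradient_eq_sum (f g : EuclideanSpace ℝ ι → ℝ) (x : EuclideanSpace ℝ ι) :
    ⟪gradient f x, gradient g x⟫ =
      ∑ i, fderiv ℝ f x (single i 1) * fderiv ℝ g x (single i 1) := by
  rw [PiLp.inner_apply]
  refine Finset.sum_congr rfl fun i _ => ?_
  rw [gradient_apply, gradient_apply, real_inner_eq_re_inner, RCLike.inner_apply, mul_comm]
  simp

end EuclideanSpace

local notation "ℝ³" => EuclideanSpace ℝ (Fin 3)

section Laplacian

open Filter Topology EuclideanSpace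

theorem sum_sq_eq_one_of_norm_eq_one {x : ℝ³} (hx : ‖x‖ = 1) :
    x 0 ^ 2 + x 1 ^ 2 + x 2 ^ 2 = 1 := by
  have h := EuclideanSpace.real_norm_sq_eq x
  rw [hx, Fin.sum_univ_three] at h
  linarith

theorem lap3_eq_of_fderiv_eventuallyEq {f : ℝ³ → ℝ} {F : ℝ³ → ℝ³ →L[ℝ] ℝ} {x : ℝ³}
    (h : fderiv ℝ f =ᶠ[𝓝 x] F) :
    lap3 f x = ∑ i, fderiv ℝ (fun y => F y (single i 1)) x (single i 1) :=
  Finset.sum_congr rfl fun i _ => by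
    have hi : (fun y => fderiv ℝ f y (single i 1)) =ᶠ[𝓝 x] fun y => F y (single i 1) :=
      h.mono fun y hy => by simp only [hy]
    rw [hi.fderiv_eq]

theorem lap3_mul {f g : ℝ³ → ℝ} {x : ℝ³}
    (hf : ContDiffAt ℝ 2 f x) (hg : ContDiffAt ℝ 2 g x) :
    lap3 (fun y => f y * g y) x =
      f x * lap3 g x + 2 * ⟪gradient f x, gradient g x⟫ + g x * lap3 f x := by
  have hdiff : ∀ᶠ y in 𝓝 x, DifferentiableAt ℝ f y ∧ DifferentiableAt ℝ g y :=
    ((hf.eventually (by simp)).and (hg.eventually (by simp))).mono fun y h =>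
      ⟨h.1.differentiableAt (by simp), h.2.differentiableAt (by simp)⟩
  have hpartial {h : ℝ³ → ℝ} (hh : ContDiffAt ℝ 2 h x) (v : ℝ³) :
      DifferentiableAt ℝ (fun y => fderiv ℝ h y v) x :=
    ((hh.fderiv_right (m := 1) (by norm_num)).differentiableAt (by simp)).clm_apply
      (differentiableAt_const v)
  have hf1 := hf.differentiableAt (by simp)
  have hg1 := hg.differentiableAt (by simp)
  rw [lap3_eq_of_fderiv_eventuallyEq (hdiff.mono fun y h => fderiv_fun_mul h.1 h.2),
    inner_gradient_eq_sum, lap3, lap3, Finset.mul_sum, Finset.mul_sum, Finset.mul_sum,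
    ← Finset.sum_add_distrib, ← Finset.sum_add_distrib]
  refine Finset.sum_congr rfl fun i _ => ?_
  simp only [add_apply, smul_apply, smul_eq_mul]
  rw [fderiv_fun_add (hf1.fun_mul (hpartial hg _)) (hg1.fun_mul (hpartial hf _)),
    fderiv_fun_mul hf1 (hpartial hg _), fderiv_fun_mul hg1 (hpartial hf _)]
  simp only [add_apply, smul_apply, smul_eq_mul]
  ring

theorem lap3_norm_pow_inv (k : ℕ) {x : ℝ³} (hx : ‖x‖ = 1) :
    lap3 (fun y => (‖y‖ ^ k)⁻¹) x = k * (k - 1) := by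
  have hx0 : x ≠ 0 := ne_zero_of_norm_ne_zero (hx ▸ one_ne_zero)
  have hF : fderiv ℝ (fun y : ℝ³ => (‖y‖ ^ k)⁻¹) =ᶠ[𝓝 x]
      fun y => -(k / ‖y‖ ^ (k + 2)) • innerSL ℝ y :=
    (eventually_ne_nhds hx0).mono fun y hy => (hasFDerivAt_norm_pow_inv k hy).fderiv
  have hcoord (i : Fin 3) :
      (fun y : ℝ³ => (-(k / ‖y‖ ^ (k + 2)) • innerSL ℝ y) (single i 1)) =
        fun y => -(k : ℝ) * (y i * (‖y‖ ^ (k + 2))⁻¹) := by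
    funext y
    simp only [div_eq_mul_inv, neg_smul, neg_apply, smul_apply, coe_innerSL_apply,
      inner_single_right, Real.ringHom_apply, one_mul, smul_eq_mul, neg_mul, neg_inj]
    ring
  have hpartial (i : Fin 3) :
      fderiv ℝ (fun y : ℝ³ => -(k : ℝ) * (y i * (‖y‖ ^ (k + 2))⁻¹)) x (single i 1) =
        -k * (1 - (k + 2) * x i ^ 2) := by
    have hi := PiLp.hasFDerivAt_apply (𝕜 := ℝ) 2 x i
    rw [fderiv_const_mul (hi.differentiableAt.fun_mul
        (hasFDerivAt_norm_pow_inv (k + 2) hx0).differentiableAt),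
      fderiv_mul_norm_pow_inv hi.differentiableAt hx, hi.fderiv]
    simp only [smul_apply, sub_apply, smul_eq_mul, PiLp.proj_apply, innerSL_apply_apply,
      inner_single_right, PiLp.single_apply, if_true, conj_trivial]
    push_cast
    ring
  rw [lap3_eq_of_fderiv_eventuallyEq hF]
  simp only [hcoord, hpartial, Fin.sum_univ_three]
  linear_combination (k : ℝ) * (k + 2) * sum_sq_eq_one_of_norm_eq_one hx

theorem lap3_mul_norm_pow_inv {P : ℝ³ → ℝ} {x : ℝ³} {k : ℕ} (hP : ContDiffAt ℝ 2 P x)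
    (hharm : lap3 P x = 0) (hPk : fderiv ℝ P x x = k * P x) (hx : ‖x‖ = 1) :
    lap3 (fun y => P y * (‖y‖ ^ k)⁻¹) x = -(k * (k + 1)) * P x := by
  have hx0 : x ≠ 0 := ne_zero_of_norm_ne_zero (hx ▸ one_ne_zero)
  rw [lap3_mul hP (contDiffAt_norm_pow_inv k hx0), lap3_norm_pow_inv k hx, hharm,
    gradient_norm_pow_inv hx, real_inner_smul_right, inner_gradient_eq_fderiv, hPk, hx]
  ring

theorem lap3_coord (i : Fin 3) (x : ℝ³) : lap3 (fun y => y i) x = 0 := by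
  rw [lap3_eq_of_fderiv_eventuallyEq (Eventually.of_forall fun y =>
    (PiLp.hasFDerivAt_apply (𝕜 := ℝ) 2 y i).fderiv)]
  simp

theorem lap3_re_pow {L : ℝ³ →L[ℝ] ℂ} (hL : ∑ i, L (single i 1) ^ 2 = 0) (m : ℕ) (x : ℝ³) :
    lap3 (fun y => (L y ^ m).re) x = 0 := by
  have hcoord (i : Fin 3) :
      (fun y => (Complex.reCLM.comp ((m * L y ^ (m - 1)) • L)) (single i 1)) =
        fun y => ((m * L (single i 1)) * L y ^ (m - 1)).re := by
    funext y
    simp only [ContinuousLinearMap.comp_apply, Complex.reCLM_apply, smul_apply, smul_eq_mul]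
    ring_nf
  rw [lap3_eq_of_fderiv_eventuallyEq (Eventually.of_forall (fderiv_re_pow L m))]
  simp only [hcoord]
  simp only [(hasFDerivAt_re_mul_pow L _ _ x).fderiv, ContinuousLinearMap.comp_apply,
    Complex.reCLM_apply, smul_apply, smul_eq_mul, ← Complex.re_sum]
  trans ((m * (m - 1 : ℕ) * L x ^ (m - 1 - 1) : ℂ) * ∑ i, L (single i 1) ^ 2).re
  · rw [Finset.mul_sum]
    exact congrArg Complex.re (Finset.sum_congr rfl fun i _ => by ring)
  · simp [hL]

end Laplacian

section ComplexCoord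

open EuclideanSpace

/-- `y₁ + i y₂` in the paper's indexing, which starts at `1`. -/
noncomputable def complexCoord : ℝ³ →L[ℝ] ℂ :=
  Complex.ofRealCLM.comp (proj 0) + Complex.I • Complex.ofRealCLM.comp (proj 1)

theorem complexCoord_apply (y : ℝ³) : complexCoord y = y 0 + Complex.I * y 1 := by
  simp [complexCoord]

theorem complexCoord_single_zero : complexCoord (single 0 1) = 1 := by
  simp [complexCoord_apply]

theorem complexCoord_single_one : complexCoord (single 1 1) = Complex.I := by
  simp [complexCoord_apply]

theorem complexCoord_single_two : complexCoord (single 2 1) = 0 := by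
  simp [complexCoord_apply]

theorem sum_complexCoord_single_sq : ∑ i, complexCoord (single i 1) ^ 2 = 0 := by
  simp [Fin.sum_univ_three, complexCoord_single_zero, complexCoord_single_one,
    complexCoord_single_two]

theorem normSq_complexCoord (x : ℝ³) :
    Complex.normSq (complexCoord x) = x 0 ^ 2 + x 1 ^ 2 := by
  rw [complexCoord_apply, mul_comm, Complex.normSq_add_mul_I]

theorem norm_gradient_re_complexCoord_pow_sq (n : ℕ) (x : ℝ³) :
    ‖gradient (fun y => (complexCoord y ^ n).re) x‖ ^ 2 =
      n ^ 2 * (x 0 ^ 2 + x 1 ^ 2) ^ (n - 1) := by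
  rw [← real_inner_self_eq_norm_sq, inner_gradient_eq_sum, Fin.sum_univ_three, fderiv_re_pow,
    ← normSq_complexCoord, ← map_pow Complex.normSq (complexCoord x) (n - 1),
    Complex.normSq_apply]
  simp only [ContinuousLinearMap.comp_apply, smul_apply, smul_eq_mul, Complex.reCLM_apply,
    complexCoord_single_zero, complexCoord_single_one, complexCoord_single_two, mul_one,
    mul_zero, Complex.zero_re, Complex.mul_re, Complex.mul_im, Complex.natCast_re,
    Complex.natCast_im, Complex.I_re, Complex.I_im]
  ring

end ComplexCoord

theorem stmt_19_general (n : ℕ)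
    (X Y : EuclideanSpace ℝ (Fin 3) → ℝ)
    (hX : X = fun y => y 2 / ‖y‖)
    (hY : Y = fun y => (((y 0 : ℂ) + Complex.I * (y 1 : ℂ)) ^ n).re / ‖y‖ ^ n)
    (x : EuclideanSpace ℝ (Fin 3)) (hx : ‖x‖ = 1) :
    lap3 X x = -2 * x 2 ∧
    lap3 Y x = -((n : ℝ) * (n + 1)) * Y x ∧
    ⟪gradient X x, gradient Y x⟫ = -(n : ℝ) * x 2 * Y x ∧
    ‖gradient Y x‖ ^ 2 = (n : ℝ) ^ 2 * ((1 - x 2 ^ 2) ^ (n - 1) - Y x ^ 2) := by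
  set P : ℝ³ → ℝ := fun y => (complexCoord y ^ n).re
  have hX' : X = fun y => y 2 * (‖y‖ ^ 1)⁻¹ := by simp only [hX, pow_one, div_eq_mul_inv]
  have hY' : Y = fun y => P y * (‖y‖ ^ n)⁻¹ := by
    simp only [hY, P, complexCoord_apply, div_eq_mul_inv]
  have hYx : Y x = P x := by simp [hY', hx]
  have hcoord := PiLp.hasFDerivAt_apply (𝕜 := ℝ) 2 x 2
  have hP : ContDiffAt ℝ 2 P x := (contDiff_re_pow complexCoord n).contDiffAt
  have hPd : DifferentiableAt ℝ P x := hP.differentiableAt (by norm_num)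
  have hXk : fderiv ℝ (fun y : ℝ³ => y 2) x x = ((1 : ℕ) : ℝ) * x 2 := by simp [hcoord.fderiv]
  have hPk : fderiv ℝ P x x = n * P x := fderiv_re_pow_apply_self complexCoord n x
  refine ⟨?_, ?_, ?_, ?_⟩
  · rw [hX', lap3_mul_norm_pow_inv (contDiffAt_piLp_apply 2) (lap3_coord 2 x) hXk hx]
    norm_num
  · rw [hYx, hY',
      lap3_mul_norm_pow_inv hP (lap3_re_pow sum_complexCoord_single_sq n x) hPk hx]
  · rw [hYx, hX', hY', inner_gradient_mul_norm_pow_inv hcoord.differentiableAt hPd hXk hPk hx,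
      EuclideanSpace.gradient_coord, EuclideanSpace.inner_single_left,
      EuclideanSpace.gradient_apply,
      fderiv_re_pow_apply_of_map_eq_zero _ _ _ complexCoord_single_two]
    simp
  · rw [← real_inner_self_eq_norm_sq, hYx, hY',
      inner_gradient_mul_norm_pow_inv hPd hPd hPk hPk hx,
      real_inner_self_eq_norm_sq, norm_gradient_re_complexCoord_pow_sq,
      show x 0 ^ 2 + x 1 ^ 2 = 1 - x 2 ^ 2 by linarith [sum_sq_eq_one_of_norm_eq_one hx]]
    ring

/-- For `n ≥ 1`, the degree-zero homogeneous functions `X̂(y) = y₃/‖y‖` and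
`Ŷ(y) = Re((y₁ + i y₂)^n)/‖y‖^n` on `ℝ³ \ {0}` satisfy, at every `x` with `‖x‖ = 1`:
`ΔX̂ = -2x₃`, `ΔŶ = -n(n+1)Ŷ`, `⟪∇X̂, ∇Ŷ⟫ = -n x₃ Ŷ` and
`‖∇Ŷ‖² = n²((1-x₃²)^{n-1} - Ŷ²)`: the spherical model of the sphere cut along `n`
meridians. -/
theorem stmt_19 (n : ℕ) (hn : 1 ≤ n)
    (X Y : EuclideanSpace ℝ (Fin 3) → ℝ)
    (hX : X = fun y => y 2 / ‖y‖)
    (hY : Y = fun y => (((y 0 : ℂ) + Complex.I * (y 1 : ℂ)) ^ n).re / ‖y‖ ^ n)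
    (x : EuclideanSpace ℝ (Fin 3)) (hx : ‖x‖ = 1) :
    lap3 X x = -2 * x 2 ∧
    lap3 Y x = -((n : ℝ) * (n + 1)) * Y x ∧
    ⟪gradient X x, gradient Y x⟫ = -(n : ℝ) * x 2 * Y x ∧
    ‖gradient Y x‖ ^ 2 = (n : ℝ) ^ 2 * ((1 - x 2 ^ 2) ^ (n - 1) - Y x ^ 2) :=
  stmt_19_general n X Y hX hY x hx
end
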